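/- Let n ≥ 1, let a : Fin n → Fin n → ℝ satisfy a i j = a j i ≥ 0 for all i ≠ j, a i i = 0, and Σ_{j ≠ i} a i j < 1 for every i. Given x : Fin n → ℝ, define x' i := x i + Σ_j a i j · (x j − x i). Then Σ_i Σ_j (x' i − x' j)² ≤ Σ_i Σ_j (x i − x j)². -/
import Mathlib

lemma expand_sq (n : ℕ) (y : Fin n → ℝ) :
    ∑ i, ∑ j, (y i - y j) ^ 2
      = 2 * n * ∑ i, y i ^ 2 - 2 * (∑ i, y i) ^ 2 := by
  have : ∀ i j : Fin n, (y i - y j) ^ 2 = y i ^ 2 - 2 * (y i * y j) + y j ^ 2 := by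
    intros; ring
  simp only [this, Finset.sum_add_distrib, Finset.sum_sub_distrib,
    Finset.sum_const, Finset.card_univ, Fintype.card_fin, ← Finset.mul_sum,
    ← Finset.sum_mul, nsmul_eq_mul]
  ring

/-- Under the consensus update with symmetric nonnegative weights whose
off-diagonal row sums are less than one, the sum of squared pairwise state
differences does not increase. -/
theorem stmt_9 (n : ℕ) (hn : 1 ≤ n) (a : Fin n → Fin n → ℝ)
    (hsym : ∀ i j, a i j = a j i)
    (hnonneg : ∀ i j, i ≠ j → 0 ≤ a i j)
    (hdiag : ∀ i, a i i = 0)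
    (hrow : ∀ i, ∑ j ∈ Finset.univ.erase i, a i j < 1)
    (x : Fin n → ℝ)
    (x' : Fin n → ℝ)
    (hx' : ∀ i, x' i = x i + ∑ j, a i j * (x j - x i)) :
    ∑ i, ∑ j, (x' i - x' j) ^ 2 ≤ ∑ i, ∑ j, (x i - x j) ^ 2 := by
  -- row sums over all j
  have hS : ∀ i, ∑ j, a i j < 1 := by
    intro i
    have := hrow i
    rwa [show (∑ j, a i j) = ∑ j ∈ Finset.univ.erase i, a i j by
      rw [← Finset.sum_erase_add _ _ (Finset.mem_univ i), hdiag, add_zero]]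
  -- the stochastic matrix
  set p : Fin n → Fin n → ℝ :=
    fun i j => (if i = j then 1 - ∑ k, a i k else 0) + a i j with hp
  have hp0 : ∀ i j, 0 ≤ p i j := by
    intro i j
    by_cases h : i = j
    · subst h; simp [hp, hdiag i, le_of_lt (hS i)]
    · simpa [hp, h] using hnonneg i j h
  have hprow : ∀ i, ∑ j, p i j = 1 := by
    intro i
    simp [hp, Finset.sum_add_distrib, Finset.sum_ite_eq, Finset.mem_univ]
  have hpsym : ∀ i j, p i j = p j i := by
    intro i j
    by_cases h : i = j
    · subst h; rfl
    · simp [hp, h, Ne.symm h, hsym i j]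
  have hpcol : ∀ j, ∑ i, p i j = 1 := by
    intro j
    rw [show (∑ i, p i j) = ∑ i, p j i from Finset.sum_congr rfl fun i _ => hpsym i j]
    exact hprow j
  have hx'p : ∀ i, x' i = ∑ j, p i j * x j := by
    intro i
    rw [hx' i]
    simp only [hp, add_mul, mul_sub, Finset.sum_add_distrib, Finset.sum_sub_distrib,
      Finset.sum_ite_eq, Finset.mem_univ, if_true, ← Finset.sum_mul, ite_mul, zero_mul]
    ring
  -- Jensen via Cauchy-Schwarz
  have hjensen : ∀ i, (x' i) ^ 2 ≤ ∑ j, p i j * (x j) ^ 2 := by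
    intro i
    rw [hx'p i]
    have hcs := Finset.sum_sq_le_sum_mul_sum_of_sq_eq_mul Finset.univ
      (r := fun j => p i j * x j) (f := fun j => p i j) (g := fun j => p i j * x j ^ 2)
      (fun j _ => hp0 i j) (fun j _ => mul_nonneg (hp0 i j) (sq_nonneg _))
      (fun j _ => by ring)
    calc (∑ j, p i j * x j) ^ 2 ≤ (∑ j, p i j) * ∑ j, p i j * x j ^ 2 := hcs
      _ = ∑ j, p i j * x j ^ 2 := by rw [hprow i, one_mul]
  -- sum of squares does not increase
  have hsq : ∑ i, (x' i) ^ 2 ≤ ∑ i, (x i) ^ 2 := by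
    calc ∑ i, (x' i) ^ 2 ≤ ∑ i, ∑ j, p i j * (x j) ^ 2 :=
          Finset.sum_le_sum fun i _ => hjensen i
      _ = ∑ j, (∑ i, p i j) * (x j) ^ 2 := by
          rw [Finset.sum_comm]; simp [Finset.sum_mul]
      _ = ∑ j, (x j) ^ 2 := by simp [hpcol]
  -- sum preservation
  have hsum : ∑ i, x' i = ∑ i, x i := by
    simp only [hx', Finset.sum_add_distrib]
    have : ∑ i, ∑ j, a i j * (x j - x i) = 0 := by
      have h1 : ∑ i, ∑ j, a i j * x j = ∑ i, ∑ j, a i j * x i := by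
        rw [Finset.sum_comm]
        exact Finset.sum_congr rfl fun j _ => Finset.sum_congr rfl fun i _ => by
          rw [hsym]
      simp only [mul_sub, Finset.sum_sub_distrib, h1, sub_self]
    rw [this, add_zero]
  rw [expand_sq, expand_sq, hsum]
  have hn' : (0:ℝ) ≤ 2 * n := by positivity
  nlinarith [mul_le_mul_of_nonneg_left hsq hn']
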